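/- For every integer n ≥ 2 and every integer k with 1 ≤ k ≤ F_{n−1}, one has odfib(F_n + k) = 2^n + odfib(k), where F_m denotes the m-th Fibonacci number. -/

import Mathlib

/-- A natural number is *fibbinary* if its binary representation
contains no two consecutive ones. -/
def IsFibbinary (m : ℕ) : Prop :=
  ∀ i : ℕ, ¬(m.testBit i = true ∧ m.testBit (i + 1) = true)

/-- `fibbin n` is the `n`-th fibbinary number, i.e. the `n`-th positive integer
(1-indexed, in increasing order) whose binary representation has no two
consecutive ones. -/
noncomputable def fibbin (n : ℕ) : ℕ :=
  Nat.nth (fun m => 0 < m ∧ IsFibbinary m) (n - 1)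

/-- `odfib n` is the `n`-th odd fibbinary number
(1-indexed, in increasing order). -/
noncomputable def odfib (n : ℕ) : ℕ :=
  Nat.nth (fun m => Odd m ∧ IsFibbinary m) (n - 1)

/-- `Z n` is the index `j` such that the `j`-th fibbinary number equals the
`n`-th odd fibbinary number, i.e. `Z n = fibbin⁻¹ (odfib n)`. -/
noncomputable def Z (n : ℕ) : ℕ :=
  sInf {j : ℕ | 1 ≤ j ∧ fibbin j = odfib n}

/-!
The odd fibbinary numbers in `[2^(n+1), 2^(n+1) + 2^n)` are exactly the numbers `2^(n+1) + t` with
`t < 2^n` odd fibbinary, and there are none in `[2^(n+1) + 2^n, 2^(n+2))`, where the two leading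
bits are adjacent ones. So the count of odd fibbinary numbers below `2^n` satisfies the Fibonacci
recurrence and equals `F_n`. For `k ≤ F_{n-1}` this puts `odfib k` below `2^(n-1)`, and setting
bit `n` of it gives an odd fibbinary number with `F_n + k - 1` smaller ones.
-/

def IsOddFibbinary (m : ℕ) : Prop := Odd m ∧ IsFibbinary m

theorem Nat.testBit_two_pow_add_of_lt {n t : ℕ} (ht : t < 2 ^ n) (i : ℕ) :
    (2 ^ n + t).testBit i = (decide (n = i) || t.testBit i) := by
  rw [← mul_one (2 ^ n), two_pow_add_eq_or_of_lt ht, mul_one, testBit_or, testBit_two_pow]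

theorem isFibbinary_two_pow (n : ℕ) : IsFibbinary (2 ^ n) := by
  intro i
  simp only [Nat.testBit_two_pow, decide_eq_true_eq]
  omega

theorem isFibbinary_two_pow_succ_add_iff {n t : ℕ} (ht : t < 2 ^ n) :
    IsFibbinary (2 ^ (n + 1) + t) ↔ IsFibbinary t := by
  have hhigh : ∀ j, n ≤ j → t.testBit j = false := fun j hj =>
    Nat.testBit_lt_two_pow (ht.trans_le (Nat.pow_le_pow_right two_pos hj))
  simp only [IsFibbinary,
    Nat.testBit_two_pow_add_of_lt (ht.trans (Nat.pow_lt_pow_succ one_lt_two))]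
  refine ⟨fun h i hi => h i (by simp [hi.1, hi.2]), fun h i ⟨hi, hi1⟩ => ?_⟩
  rcases Nat.lt_or_ge (i + 1) n with hlt | hge
  · simp_all [show n + 1 ≠ i by omega]
  · have := hhigh (i + 1) hge
    have := hhigh i
    simp_all

theorem not_isFibbinary_two_pow_succ_add_two_pow_add {n k : ℕ} (hk : k < 2 ^ n) :
    ¬ IsFibbinary (2 ^ (n + 1) + 2 ^ n + k) := by
  have hk' : 2 ^ n + k < 2 ^ (n + 1) := by rw [pow_succ]; omega
  intro h
  refine h n ⟨?_, ?_⟩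
  · rw [add_assoc, Nat.testBit_two_pow_add_of_lt hk', Nat.testBit_two_pow_add_of_lt hk]; simp
  · rw [add_assoc, Nat.testBit_two_pow_add_of_lt hk']; simp

theorem isOddFibbinary_two_pow_succ_add_iff {n t : ℕ} (ht : t < 2 ^ n) :
    IsOddFibbinary (2 ^ (n + 1) + t) ↔ IsOddFibbinary t := by
  rw [IsOddFibbinary, IsOddFibbinary, isFibbinary_two_pow_succ_add_iff ht]
  simp [Nat.odd_add', Nat.even_pow]

section Count

open scoped Classical

theorem count_isOddFibbinary_two_pow_succ_add {n m : ℕ} (hm : m ≤ 2 ^ n) :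
    Nat.count IsOddFibbinary (2 ^ (n + 1) + m) =
      Nat.count IsOddFibbinary (2 ^ (n + 1)) + Nat.count IsOddFibbinary m := by
  rw [Nat.count_add]
  congr 1
  simp only [Nat.count_eq_card_filter_range]
  congr 1
  refine Finset.filter_congr fun k hk => isOddFibbinary_two_pow_succ_add_iff ?_
  rw [Finset.mem_range] at hk
  omega

theorem count_isOddFibbinary_two_pow (n : ℕ) : Nat.count IsOddFibbinary (2 ^ n) = Nat.fib n := by
  induction n using Nat.twoStepInduction with
  | zero => simp [Nat.count_one, IsOddFibbinary]
  | one =>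
    rw [pow_one, Nat.count_succ, Nat.count_one]
    simp [IsOddFibbinary, by simpa using isFibbinary_two_pow 0]
  | more n ih₀ ih₁ =>
    have hsplit : 2 ^ (n + 2) = 2 ^ (n + 1) + 2 ^ n + 2 ^ n := by ring
    have htop : Nat.count (fun k => IsOddFibbinary (2 ^ (n + 1) + 2 ^ n + k)) (2 ^ n) = 0 :=
      Nat.count_of_forall_not fun k hk h => not_isFibbinary_two_pow_succ_add_two_pow_add hk h.2
    rw [hsplit, Nat.count_add, htop, add_zero, count_isOddFibbinary_two_pow_succ_add le_rfl,
      ih₀, ih₁, Nat.fib_add_two, add_comm]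

end Count

theorem odfib_eq_nth (n : ℕ) : odfib n = Nat.nth IsOddFibbinary (n - 1) := rfl

theorem odfib_fib_add_general (n k : ℕ) (hk1 : 1 ≤ k)
    (hk2 : k ≤ Nat.fib (n - 1)) :
    odfib (Nat.fib n + k) = 2 ^ n + odfib k := by
  classical
  obtain ⟨j, rfl⟩ : ∃ j, n = j + 1 := ⟨n - 1, by cases n <;> simp_all⟩
  rw [add_tsub_cancel_right] at hk2
  have hlt : k - 1 < Nat.count IsOddFibbinary (2 ^ j) := by
    rw [count_isOddFibbinary_two_pow]; omega
  have hcard : ∀ hf : (Set.ofPred IsOddFibbinary).Finite, k - 1 < hf.toFinset.card :=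
    fun hf => hlt.trans_le (Nat.count_le_card hf _)
  have hm : Nat.nth IsOddFibbinary (k - 1) < 2 ^ j := Nat.nth_lt_of_lt_count hlt
  have hshift : IsOddFibbinary (2 ^ (j + 1) + Nat.nth IsOddFibbinary (k - 1)) :=
    (isOddFibbinary_two_pow_succ_add_iff hm).2 (Nat.nth_mem _ hcard)
  have hcount : Nat.count IsOddFibbinary (2 ^ (j + 1) + Nat.nth IsOddFibbinary (k - 1)) =
      Nat.fib (j + 1) + k - 1 := by
    rw [count_isOddFibbinary_two_pow_succ_add hm.le, count_isOddFibbinary_two_pow,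
      Nat.count_nth hcard]
    omega
  rw [odfib_eq_nth, odfib_eq_nth, ← hcount, Nat.nth_count hshift]

/-- For `n ≥ 2` and `1 ≤ k ≤ F_{n−1}`, `odfib (F_n + k) = 2^n + odfib k`. -/
theorem odfib_fib_add (n k : ℕ) (hn : 2 ≤ n) (hk1 : 1 ≤ k)
    (hk2 : k ≤ Nat.fib (n - 1)) :
    odfib (Nat.fib n + k) = 2 ^ n + odfib k :=
  odfib_fib_add_general n k hk1 hk2
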